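/- Cutting preserves solvability: Let B = {B1,...,Bm} be a multiset of regular blocks, wmax and hmax the maximal block width and height, and C a set of non-overlapping containers. Then (B, C) has a solution if and only if (B, σ(C,[wmax,hmax])) has a solution; moreover, the solutions of the two problems coincide as assignments of locations to blocks. -/

import Mathlib

/-!
Every block is an aligned tile `Q` of size `⪯ [wmax, hmax]`, so it suffices that such a tile
inside a container `c` lies in a single piece of a smallest cut `S` of `c`. Aligned intervals
whose lengths are powers of the same `q` are nested or disjoint. Hence a piece meeting `Q` either
lies in `Q`, or sticks out of `Q` in one coordinate; in the latter case `Q` extends, in that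
coordinate, to a strictly larger tile inside `c`, and we conclude by induction on the size of `Q`.
If every piece meeting `Q` lies in `Q`, these pieces may be replaced by `Q` itself, so by
minimality of `S` there is only one of them.
-/

/-- The half-open rectangular region `[x, x+w) × [y, y+h) ⊆ ℤ²`. -/
def Reg (x y w h : ℤ) : Set (ℤ × ℤ) :=
  Set.Ico x (x + w) ×ˢ Set.Ico y (y + h)

/-- Region of a container given as a tuple `(x, y, w, h)`. -/
def RegT (c : ℤ × ℤ × ℤ × ℤ) : Set (ℤ × ℤ) :=
  Reg c.1 c.2.1 c.2.2.1 c.2.2.2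

/-- A solution to the constrained packing problem. -/
def IsSolution (m : ℕ) (wB hB : Fin m → ℤ) (𝒞 : Set (ℤ × ℤ × ℤ × ℤ))
    (x y : Fin m → ℤ) : Prop :=
  (∀ i, wB i ∣ x i ∧ hB i ∣ y i) ∧
  (∀ i j, i ≠ j →
    Reg (x i) (y i) (wB i) (hB i) ∩ Reg (x j) (y j) (wB j) (hB j) = ∅) ∧
  (∀ i, ∃ c ∈ 𝒞, Reg (x i) (y i) (wB i) (hB i) ⊆ RegT c)

/-- `S` is a finite set of pairwise non-overlapping regular aligned containers of
size `⪯ [w,h]` whose union is the container `c`. -/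
def GoodCut (q1 q2 : ℕ) (w h : ℤ) (c : ℤ × ℤ × ℤ × ℤ)
    (S : Set (ℤ × ℤ × ℤ × ℤ)) : Prop :=
  S.Finite ∧
  (∀ d ∈ S, ∃ a b : ℕ,
      d.2.2.1 = (q1 : ℤ) ^ a ∧ d.2.2.2 = (q2 : ℤ) ^ b ∧
      d.2.2.1 ∣ d.1 ∧ d.2.2.2 ∣ d.2.1 ∧ d.2.2.1 ≤ w ∧ d.2.2.2 ≤ h) ∧
  (∀ d ∈ S, ∀ d' ∈ S, d ≠ d' → RegT d ∩ RegT d' = ∅) ∧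
  (⋃ d ∈ S, RegT d) = RegT c

/-- `σ(c,[w,h])`: `S` is a smallest good cut of `c`. -/
def SigmaCut (q1 q2 : ℕ) (w h : ℤ) (c : ℤ × ℤ × ℤ × ℤ)
    (S : Set (ℤ × ℤ × ℤ × ℤ)) : Prop :=
  GoodCut q1 q2 w h c S ∧ ∀ T, GoodCut q1 q2 w h c T → S.ncard ≤ T.ncard

def IsCutPiece (q1 q2 : ℕ) (w h : ℤ) (d : ℤ × ℤ × ℤ × ℤ) : Prop :=
  ∃ a b : ℕ, d.2.2.1 = (q1 : ℤ) ^ a ∧ d.2.2.2 = (q2 : ℤ) ^ b ∧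
    d.2.2.1 ∣ d.1 ∧ d.2.2.2 ∣ d.2.1 ∧ d.2.2.1 ≤ w ∧ d.2.2.2 ≤ h

lemma Int.Ico_subset_Ico_of_dvd {u v x x' : ℤ} (hu : 0 < u) (huv : u ∣ v) (hx : u ∣ x)
    (hx' : v ∣ x') (hmeet : (Set.Ico x (x + u) ∩ Set.Ico x' (x' + v)).Nonempty) :
    Set.Ico x (x + u) ⊆ Set.Ico x' (x' + v) := by
  obtain ⟨t, ⟨hxt, htx⟩, ⟨hx't, htx'⟩⟩ := hmeet
  obtain ⟨k, hk⟩ : u ∣ x - x' := dvd_sub hx (huv.trans hx')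
  obtain ⟨s, rfl⟩ := huv
  -- `x - x' = u * k` lies in `(-u, u * s)`, so `0 ≤ k < s`
  have hk0 : 0 ≤ k := by
    by_contra! hk0
    nlinarith
  have hks : k + 1 ≤ s := by
    by_contra! hks
    nlinarith
  exact Set.Ico_subset_Ico (by nlinarith) (by nlinarith)

lemma Int.Ico_pow_subset_or {q : ℕ} (hq : 1 < q) {a e : ℕ} {x x' : ℤ}
    (hx : (q : ℤ) ^ a ∣ x) (hx' : (q : ℤ) ^ e ∣ x')
    (hmeet : (Set.Ico x (x + q ^ a) ∩ Set.Ico x' (x' + q ^ e)).Nonempty) :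
    Set.Ico x' (x' + q ^ e) ⊆ Set.Ico x (x + q ^ a) ∨
      (q : ℤ) ^ a < q ^ e ∧ Set.Ico x (x + q ^ a) ⊆ Set.Ico x' (x' + q ^ e) := by
  have hq' : (1 : ℤ) < q := by exact_mod_cast hq
  rcases le_or_gt e a with hea | hae
  · exact .inl <| Int.Ico_subset_Ico_of_dvd (pow_pos (by positivity) e) (pow_dvd_pow _ hea) hx' hx
      (Set.inter_comm _ _ ▸ hmeet)
  · exact .inr ⟨pow_lt_pow_right₀ hq' hae,
      Int.Ico_subset_Ico_of_dvd (pow_pos (by positivity) a) (pow_dvd_pow _ hae.le) hx hx' hmeet⟩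

lemma Reg_subset_Reg_iff {x y w h x' y' w' h' : ℤ} (hw : 0 < w) (hh : 0 < h) :
    Reg x y w h ⊆ Reg x' y' w' h' ↔
      Set.Ico x (x + w) ⊆ Set.Ico x' (x' + w') ∧ Set.Ico y (y + h) ⊆ Set.Ico y' (y' + h') :=
  Set.prod_subset_prod_iff' ⟨(x, y), by simp [hw, hh]⟩

section Cuts

variable {q1 q2 : ℕ} {w h : ℤ} {c q : ℤ × ℤ × ℤ × ℤ} {S : Set (ℤ × ℤ × ℤ × ℤ)}

namespace IsCutPiece

lemma nonempty (hq1 : 0 < q1) (hq2 : 0 < q2) (hq : IsCutPiece q1 q2 w h q) :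
    (RegT q).Nonempty := by
  obtain ⟨a, b, hqa, hqb, -⟩ := hq
  refine ⟨(q.1, q.2.1), ?_⟩
  simp only [RegT, Reg, Set.mem_prod, Set.mem_Ico, hqa, hqb]
  exact ⟨⟨le_rfl, by simp [pow_pos, hq1]⟩, ⟨le_rfl, by simp [pow_pos, hq2]⟩⟩

lemma subset_or_exists_larger (hq1 : 1 < q1) (hq2 : 1 < q2) {d : ℤ × ℤ × ℤ × ℤ}
    (hd : IsCutPiece q1 q2 w h d) (hq : IsCutPiece q1 q2 w h q)
    (hdc : RegT d ⊆ RegT c) (hqc : RegT q ⊆ RegT c) (hmeet : (RegT d ∩ RegT q).Nonempty) :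
    RegT d ⊆ RegT q ∨ ∃ q', IsCutPiece q1 q2 w h q' ∧ RegT q ⊆ RegT q' ∧
      RegT q' ⊆ RegT c ∧ q.2.2.1 + q.2.2.2 < q'.2.2.1 + q'.2.2.2 := by
  obtain ⟨cx, cy, cw, ch⟩ := c
  obtain ⟨dx, dy, dw, dh⟩ := d
  obtain ⟨x, y, qw, qh⟩ := q
  obtain ⟨e, f, rfl, rfl, hdx, hdy, hdw, hdh⟩ := hd
  obtain ⟨a, b, rfl, rfl, hx, hy, hqw, hqh⟩ := hq
  have pos1 : ∀ n : ℕ, (0 : ℤ) < q1 ^ n := fun n => pow_pos (by positivity) n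
  have pos2 : ∀ n : ℕ, (0 : ℤ) < q2 ^ n := fun n => pow_pos (by positivity) n
  obtain ⟨hdcx, hdcy⟩ := (Reg_subset_Reg_iff (pos1 e) (pos2 f)).mp hdc
  obtain ⟨hqcx, hqcy⟩ := (Reg_subset_Reg_iff (pos1 a) (pos2 b)).mp hqc
  obtain ⟨t, ⟨htdx, htdy⟩, ⟨htqx, htqy⟩⟩ := hmeet
  rcases Int.Ico_pow_subset_or hq1 hx hdx ⟨t.1, htqx, htdx⟩ with hsx | ⟨hlt, hsx⟩
  · rcases Int.Ico_pow_subset_or hq2 hy hdy ⟨t.2, htqy, htdy⟩ with hsy | ⟨hlt, hsy⟩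
    · exact .inl (Set.prod_mono hsx hsy)
    · refine .inr ⟨(x, dy, q1 ^ a, q2 ^ f), ⟨a, f, rfl, rfl, hx, hdy, hqw, hdh⟩,
        Set.prod_mono le_rfl hsy, Set.prod_mono hqcx hdcy, by simpa using hlt⟩
  · refine .inr ⟨(dx, y, q1 ^ e, q2 ^ b), ⟨e, b, rfl, rfl, hdx, hy, hdw, hqh⟩,
      Set.prod_mono hsx le_rfl, Set.prod_mono hdcx hqcy, by simpa using hlt⟩

end IsCutPiece

namespace GoodCut

lemma isCutPiece (hS : GoodCut q1 q2 w h c S) {d : ℤ × ℤ × ℤ × ℤ} (hd : d ∈ S) :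
    IsCutPiece q1 q2 w h d :=
  hS.2.1 d hd

lemma subset (hS : GoodCut q1 q2 w h c S) {d : ℤ × ℤ × ℤ × ℤ} (hd : d ∈ S) :
    RegT d ⊆ RegT c :=
  hS.2.2.2 ▸ Set.subset_biUnion_of_mem hd

lemma exists_mem_of_mem (hS : GoodCut q1 q2 w h c S) {t : ℤ × ℤ} (ht : t ∈ RegT c) :
    ∃ d ∈ S, t ∈ RegT d := by
  simpa [← hS.2.2.2] using ht

lemma insert_diff (hS : GoodCut q1 q2 w h c S) (hq : IsCutPiece q1 q2 w h q)
    (hqc : RegT q ⊆ RegT c) (hP : ∀ d ∈ S, (RegT d ∩ RegT q).Nonempty → RegT d ⊆ RegT q) :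
    GoodCut q1 q2 w h c (insert q (S \ {d ∈ S | (RegT d ∩ RegT q).Nonempty})) := by
  have hdisj : ∀ d ∈ S \ {d ∈ S | (RegT d ∩ RegT q).Nonempty}, RegT d ∩ RegT q = ∅ :=
    fun d hd => Set.not_nonempty_iff_eq_empty.mp fun hne => hd.2 ⟨hd.1, hne⟩
  refine ⟨hS.1.sdiff.insert q, ?_, ?_, ?_⟩
  · rintro d (rfl | hd)
    exacts [hq, hS.isCutPiece hd.1]
  · rintro d (rfl | hd) d' (rfl | hd') hne
    · exact absurd rfl hne
    · rw [Set.inter_comm]; exact hdisj d' hd'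
    · exact hdisj d hd
    · exact hS.2.2.1 d hd.1 d' hd'.1 hne
  · refine subset_antisymm (Set.iUnion₂_subset ?_) fun t ht => ?_
    · rintro d (rfl | hd)
      exacts [hqc, hS.subset hd.1]
    obtain ⟨d, hd, htd⟩ := hS.exists_mem_of_mem ht
    by_cases hdq : (RegT d ∩ RegT q).Nonempty
    · exact Set.mem_biUnion (Set.mem_insert _ _) (hP d hd hdq htd)
    · exact Set.mem_biUnion (Set.mem_insert_of_mem _ ⟨hd, fun h => hdq h.2⟩) htd

end GoodCut

namespace SigmaCut

lemma exists_mem_superset_of_forall_meet_subset (hS : SigmaCut q1 q2 w h c S)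
    (hq : IsCutPiece q1 q2 w h q) (hqc : RegT q ⊆ RegT c) (hqne : (RegT q).Nonempty)
    (hP : ∀ d ∈ S, (RegT d ∩ RegT q).Nonempty → RegT d ⊆ RegT q) :
    ∃ d ∈ S, RegT q ⊆ RegT d := by
  obtain ⟨hcut, hmin⟩ := hS
  set P := {d ∈ S | (RegT d ∩ RegT q).Nonempty}
  have hPS : P ⊆ S := Set.sep_subset _ _
  -- by minimality, merging the pieces of `P` into `q` cannot decrease the number of pieces
  have hP1 : P.ncard ≤ 1 := by
    have : S.ncard ≤ (insert q (S \ P)).ncard := hmin _ (hcut.insert_diff hq hqc hP)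
    have := Set.ncard_insert_le q (S \ P)
    have := Set.ncard_sdiff_add_ncard_of_subset hPS hcut.1
    omega
  have hmem : ∀ t ∈ RegT q, ∃ d ∈ P, t ∈ RegT d := fun t ht => by
    obtain ⟨d, hd, htd⟩ := hcut.exists_mem_of_mem (hqc ht)
    exact ⟨d, ⟨hd, t, htd, ht⟩, htd⟩
  obtain ⟨t, ht⟩ := hqne
  obtain ⟨d, hdP, -⟩ := hmem t ht
  refine ⟨d, hdP.1, fun u hu => ?_⟩
  obtain ⟨d', hd'P, hud'⟩ := hmem u hu
  rwa [(Set.ncard_le_one (hcut.1.subset hPS)).mp hP1 d hdP d' hd'P]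

theorem exists_mem_superset (hq1 : 1 < q1) (hq2 : 1 < q2) (hS : SigmaCut q1 q2 w h c S)
    (hq : IsCutPiece q1 q2 w h q) (hqc : RegT q ⊆ RegT c) :
    ∃ d ∈ S, RegT q ⊆ RegT d := by
  obtain ⟨n, hn⟩ : ∃ n : ℕ, w - q.2.2.1 + (h - q.2.2.2) ≤ n :=
    ⟨(w - q.2.2.1 + (h - q.2.2.2)).toNat, Int.self_le_toNat _⟩
  induction n using Nat.strong_induction_on generalizing q with
  | _ n ih =>
  by_cases hP : ∀ d ∈ S, (RegT d ∩ RegT q).Nonempty → RegT d ⊆ RegT q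
  · exact hS.exists_mem_superset_of_forall_meet_subset hq hqc
      (hq.nonempty (by omega) (by omega)) hP
  push Not at hP
  obtain ⟨d, hd, hmeet, hdq⟩ := hP
  obtain hsub | ⟨q', hq', hqq', hq'c, hlt⟩ := (hS.1.isCutPiece hd).subset_or_exists_larger
    hq1 hq2 hq (hS.1.subset hd) hqc hmeet
  · exact absurd hsub hdq
  obtain ⟨-, -, -, -, -, -, hw', hh'⟩ := id hq'
  obtain ⟨d', hd', hq'd'⟩ := ih (w - q'.2.2.1 + (h - q'.2.2.2)).toNat (by omega) hq' hq'c
    (Int.self_le_toNat _)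
  exact ⟨d', hd', hqq'.trans hq'd'⟩

end SigmaCut

lemma exists_mem_superset_iff_exists_mem_cut_superset (hq1 : 1 < q1) (hq2 : 1 < q2)
    {𝒞 : Set (ℤ × ℤ × ℤ × ℤ)} {cut : ℤ × ℤ × ℤ × ℤ → Set (ℤ × ℤ × ℤ × ℤ)}
    (hcut : ∀ c ∈ 𝒞, SigmaCut q1 q2 w h c (cut c)) (hq : IsCutPiece q1 q2 w h q) :
    (∃ c ∈ 𝒞, RegT q ⊆ RegT c) ↔ ∃ d ∈ ⋃ c ∈ 𝒞, cut c, RegT q ⊆ RegT d := by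
  simp only [Set.mem_iUnion₂]
  constructor
  · rintro ⟨c, hc, hqc⟩
    obtain ⟨d, hd, hqd⟩ := (hcut c hc).exists_mem_superset hq1 hq2 hq hqc
    exact ⟨d, ⟨c, hc, hd⟩, hqd⟩
  · rintro ⟨d, ⟨c, hc, hd⟩, hqd⟩
    exact ⟨c, hc, hqd.trans ((hcut c hc).1.subset hd)⟩

end Cuts

theorem stmt11_general (q1 q2 : ℕ) (hq1 : 1 < q1) (hq2 : 1 < q2)
    (m : ℕ) (wB hB : Fin m → ℤ)
    (hBreg : ∀ i, ∃ a b : ℕ, wB i = (q1 : ℤ) ^ a ∧ hB i = (q2 : ℤ) ^ b)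
    (wmax hmax : ℤ)
    (hwmax : IsGreatest (Set.range wB) wmax)
    (hhmax : IsGreatest (Set.range hB) hmax)
    (𝒞 : Set (ℤ × ℤ × ℤ × ℤ))
    (cut : (ℤ × ℤ × ℤ × ℤ) → Set (ℤ × ℤ × ℤ × ℤ))
    (hcut : ∀ c ∈ 𝒞, SigmaCut q1 q2 wmax hmax c (cut c))
    (𝒞σ : Set (ℤ × ℤ × ℤ × ℤ)) (h𝒞σ : 𝒞σ = ⋃ c ∈ 𝒞, cut c) :
    ((∃ x y, IsSolution m wB hB 𝒞 x y) ↔ (∃ x y, IsSolution m wB hB 𝒞σ x y)) ∧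
    (∀ x y, IsSolution m wB hB 𝒞 x y ↔ IsSolution m wB hB 𝒞σ x y) := by
  subst h𝒞σ
  have hsol : ∀ x y,
      IsSolution m wB hB 𝒞 x y ↔ IsSolution m wB hB (⋃ c ∈ 𝒞, cut c) x y := by
    intro x y
    refine and_congr_right fun hdvd => and_congr_right fun _ => forall_congr' fun i => ?_
    obtain ⟨a, b, hwa, hhb⟩ := hBreg i
    have hblock : IsCutPiece q1 q2 wmax hmax (x i, y i, wB i, hB i) :=
      ⟨a, b, hwa, hhb, (hdvd i).1, (hdvd i).2, hwmax.2 ⟨i, rfl⟩, hhmax.2 ⟨i, rfl⟩⟩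
    exact exists_mem_superset_iff_exists_mem_cut_superset hq1 hq2 hcut hblock
  exact ⟨exists_congr fun x => exists_congr fun y => hsol x y, hsol⟩

/-- cutting every container by `σ(·,[wmax,hmax])`, where `wmax` and
`hmax` are the maximal block width and height, preserves solvability; moreover the
solutions of `(B, 𝒞)` and `(B, σ(𝒞,[wmax,hmax]))` coincide as assignments of
locations to blocks. -/
theorem stmt11 (q1 q2 : ℕ) (hq1 : 1 < q1) (hq2 : 1 < q2)
    (m : ℕ) (wB hB : Fin m → ℤ)
    (hBreg : ∀ i, ∃ a b : ℕ, wB i = (q1 : ℤ) ^ a ∧ hB i = (q2 : ℤ) ^ b)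
    (wmax hmax : ℤ)
    (hwmax : IsGreatest (Set.range wB) wmax)
    (hhmax : IsGreatest (Set.range hB) hmax)
    (𝒞 : Set (ℤ × ℤ × ℤ × ℤ))
    (h𝒞pos : ∀ c ∈ 𝒞, 0 < c.2.2.1 ∧ 0 < c.2.2.2)
    (h𝒞disj : ∀ c ∈ 𝒞, ∀ c' ∈ 𝒞, c ≠ c' → RegT c ∩ RegT c' = ∅)
    (cut : (ℤ × ℤ × ℤ × ℤ) → Set (ℤ × ℤ × ℤ × ℤ))
    (hcut : ∀ c ∈ 𝒞, SigmaCut q1 q2 wmax hmax c (cut c))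
    (𝒞σ : Set (ℤ × ℤ × ℤ × ℤ)) (h𝒞σ : 𝒞σ = ⋃ c ∈ 𝒞, cut c) :
    ((∃ x y, IsSolution m wB hB 𝒞 x y) ↔ (∃ x y, IsSolution m wB hB 𝒞σ x y)) ∧
    (∀ x y, IsSolution m wB hB 𝒞 x y ↔ IsSolution m wB hB 𝒞σ x y) :=
  stmt11_general q1 q2 hq1 hq2 m wB hB hBreg wmax hmax hwmax hhmax 𝒞 cut hcut 𝒞σ h𝒞σ
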